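/- arXiv:1403.0012 — 2 statements merged into one kernel-verified Lean document; each statement's English description precedes it below -/
import Mathlib

section
/- For every δ ∈ (0,1), every real s > 0 and every positive integer m, (1/Γ(m)) ∫_0^∞ x^{m−1} e^{−x} ( e^{−sx} + (sx)^δ γ(1−δ, sx) ) dx = (1+s)^{−m} + m s^δ ∫_{1/(1+s)}^1 y^{m+δ−1} (1−y)^{−δ} dy, where γ(a,z) := ∫_0^z t^{a−1} e^{−t} dt is the lower incomplete gamma function and Γ is the Gamma function; in particular both sides are finite. -/
/-!
Substituting `t = z u` gives `z^δ γ(1-δ, z) = z ∫_0^1 u^(-δ) e^(-z u) du`. With `z = s x`, Fubini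
turns the `x`-integral into a Gamma integral, so the left side becomes
`(1+s)^(-m) + m s ∫_0^1 u^(-δ) (1 + s u)^(-m-1) du`, and the substitution `y = 1/(1 + s u)`
identifies the last integral with `s^(δ-1) ∫_{1/(1+s)}^1 y^(m+δ-1) (1-y)^(-δ) dy`.
-/

open MeasureTheory Real Set

/-- The lower incomplete gamma function `γ(a, z) = ∫_0^z t^(a-1) e^(-t) dt`. -/
noncomputable def lowerGamma (a z : ℝ) : ℝ := ∫ t in (0:ℝ)..z, t ^ (a - 1) * Real.exp (-t)

lemma integrableOn_rpow_mul_exp_neg_mul {s b : ℝ} (hs : -1 < s) (hb : 0 < b) :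
    IntegrableOn (fun x : ℝ => x ^ s * exp (-(b * x))) (Ioi 0) := by
  simpa [neg_mul] using integrableOn_rpow_mul_exp_neg_mul_rpow hs one_pos hb

lemma lowerGamma_eq_rpow_mul_integral (a : ℝ) {z : ℝ} (hz : 0 < z) :
    lowerGamma a z = z ^ a * ∫ u in Ioo 0 1, u ^ (a - 1) * exp (-(z * u)) := by
  have hsub := intervalIntegral.integral_comp_mul_left
    (fun t => t ^ (a - 1) * exp (-t)) hz.ne' (a := 0) (b := 1)
  simp only [mul_zero, mul_one, smul_eq_mul] at hsub
  have hpull : ∫ u in (0:ℝ)..1, (z * u) ^ (a - 1) * exp (-(z * u))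
      = z ^ (a - 1) * ∫ u in (0:ℝ)..1, u ^ (a - 1) * exp (-(z * u)) := by
    rw [← intervalIntegral.integral_const_mul]
    refine intervalIntegral.integral_congr fun u hu => ?_
    rw [uIcc_of_le zero_le_one] at hu
    simp only [mul_rpow hz.le hu.1]
    ring
  calc lowerGamma a z = z * (z ^ (a - 1) * ∫ u in (0:ℝ)..1, u ^ (a - 1) * exp (-(z * u))) := by
        rw [← hpull, hsub, lowerGamma]
        field_simp
    _ = _ := by
        rw [intervalIntegral.integral_of_le zero_le_one, integral_Ioc_eq_integral_Ioo,
          ← mul_assoc, mul_comm z, ← rpow_add_one hz.ne', sub_add_cancel]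

lemma integral_Ioi_rpow_mul_exp_mul_integral {p s : ℝ} (hp : 0 < p) (hs : 0 ≤ s) {g : ℝ → ℝ}
    (hg : IntegrableOn g (Ioo 0 1)) :
    IntegrableOn (fun x => x ^ (p - 1) * exp (-x) * ∫ u in Ioo 0 1, g u * exp (-(s * x * u)))
      (Ioi 0) ∧
    ∫ x in Ioi 0, x ^ (p - 1) * exp (-x) * ∫ u in Ioo 0 1, g u * exp (-(s * x * u))
      = Gamma p * ∫ u in Ioo 0 1, g u * (1 + s * u) ^ (-p) := by
  set F : ℝ × ℝ → ℝ := fun z => z.1 ^ (p - 1) * exp (-z.1) * (g z.2 * exp (-(s * z.1 * z.2)))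
  have hΓ : IntegrableOn (fun x : ℝ => x ^ (p - 1) * exp (-x)) (Ioi 0) := by
    simpa using integrableOn_rpow_mul_exp_neg_mul (s := p - 1) (by linarith) one_pos
  have hF : Integrable F ((volume.restrict (Ioi 0)).prod (volume.restrict (Ioo 0 1))) := by
    refine (hΓ.mul_prod hg.norm).mono' ?_ ?_
    · exact (by fun_prop : Measurable fun z : ℝ × ℝ => z.1 ^ (p - 1) * exp (-z.1))
        |>.aestronglyMeasurable.mul <| hg.aestronglyMeasurable.comp_snd.mul
          (by fun_prop : Measurable fun z : ℝ × ℝ => exp (-(s * z.1 * z.2))).aestronglyMeasurable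
    · rw [Measure.prod_restrict]
      filter_upwards [ae_restrict_mem (measurableSet_Ioi.prod measurableSet_Ioo)]
        with z ⟨hx, hu⟩
      have hexp : exp (-(s * z.1 * z.2)) ≤ 1 := by
        have : 0 ≤ s * z.1 * z.2 := by have := hx.out.le; have := hu.1.le; positivity
        simpa using this
      simp only [F, norm_mul, Real.norm_eq_abs, abs_exp,
        abs_of_nonneg (rpow_nonneg hx.out.le _)]
      have : 0 ≤ z.1 ^ (p - 1) * exp (-z.1) * |g z.2| := by
        have := rpow_nonneg hx.out.le (p - 1); positivity
      nlinarith
  have hpull : ∀ x, ∫ u in Ioo 0 1, F (x, u)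
      = x ^ (p - 1) * exp (-x) * ∫ u in Ioo 0 1, g u * exp (-(s * x * u)) :=
    fun x => integral_const_mul (x ^ (p - 1) * exp (-x)) _
  have hinner : ∀ u ∈ Ioo (0:ℝ) 1,
      ∫ x in Ioi 0, F (x, u) = Gamma p * (g u * (1 + s * u) ^ (-p)) := by
    intro u hu
    have hc : 0 < 1 + s * u := by have := hu.1; positivity
    calc ∫ x in Ioi 0, F (x, u)
        = g u * ∫ x in Ioi 0, x ^ (p - 1) * exp (-((1 + s * u) * x)) := by
          rw [← integral_const_mul]
          refine integral_congr_ae (Filter.Eventually.of_forall fun x => ?_)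
          simp only [F]
          rw [show -((1 + s * u) * x) = -x + -(s * x * u) by ring, exp_add]
          ring
      _ = Gamma p * (g u * (1 + s * u) ^ (-p)) := by
          rw [integral_rpow_mul_exp_neg_mul_Ioi hp hc, one_div, inv_rpow hc.le, ← rpow_neg hc.le]
          ring
  simp_rw [← hpull]
  refine ⟨hF.integral_prod_left, ?_⟩
  rw [integral_integral_swap hF, setIntegral_congr_fun measurableSet_Ioo hinner, integral_const_mul]

lemma image_inv_one_add_mul_Ioo {s : ℝ} (hs : 0 < s) :
    (fun u => (1 + s * u)⁻¹) '' Ioo 0 1 = Ioo (1 / (1 + s)) 1 := by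
  ext y
  constructor
  · rintro ⟨u, ⟨hu0, hu1⟩, rfl⟩
    have hc : 1 < 1 + s * u := by nlinarith
    exact ⟨by rw [one_div]; exact inv_strictAnti₀ (by linarith) (by nlinarith),
      inv_lt_one_of_one_lt₀ hc⟩
  · rintro ⟨hy1, hy2⟩
    have hy0 : 0 < y := lt_trans (by positivity) hy1
    refine ⟨(1 - y) / (s * y), ⟨by apply div_pos <;> nlinarith, ?_⟩, ?_⟩
    · rw [div_lt_one (by positivity)]
      rw [div_lt_iff₀ (by linarith)] at hy1
      linarith
    · field_simp
      ring

lemma integral_Ioo_comp_inv_one_add_mul {s : ℝ} (hs : 0 < s) (f : ℝ → ℝ) :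
    (IntegrableOn f (Ioo (1 / (1 + s)) 1) ↔
      IntegrableOn (fun u => s / (1 + s * u) ^ 2 * f (1 + s * u)⁻¹) (Ioo 0 1)) ∧
    ∫ y in Ioo (1 / (1 + s)) 1, f y = ∫ u in Ioo 0 1, s / (1 + s * u) ^ 2 * f (1 + s * u)⁻¹ := by
  have hderiv : ∀ u ∈ Ioo (0:ℝ) 1, HasDerivWithinAt (fun u => (1 + s * u)⁻¹)
      (-s / (1 + s * u) ^ 2) (Ioo 0 1) u := by
    intro u hu
    have hc : 1 + s * u ≠ 0 := by have := hu.1; positivity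
    have := (((hasDerivAt_id u).const_mul s).const_add 1).inv hc
    simp only [id, mul_one] at this
    exact this.hasDerivWithinAt
  have hinj : InjOn (fun u => (1 + s * u)⁻¹) (Ioo 0 1) := by
    intro u _ v _ h
    simpa [hs.ne'] using h
  have habs : EqOn (fun u => |-s / (1 + s * u) ^ 2| • f (1 + s * u)⁻¹)
      (fun u => s / (1 + s * u) ^ 2 * f (1 + s * u)⁻¹) (Ioo 0 1) := by
    intro u _
    dsimp only
    rw [neg_div, abs_neg, abs_of_nonneg (by positivity), smul_eq_mul]
  rw [← image_inv_one_add_mul_Ioo hs,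
    integrableOn_image_iff_integrableOn_abs_deriv_smul measurableSet_Ioo hderiv hinj,
    integral_image_eq_integral_abs_deriv_smul measurableSet_Ioo hderiv hinj]
  exact ⟨integrableOn_congr_fun habs measurableSet_Ioo,
    setIntegral_congr_fun measurableSet_Ioo habs⟩

lemma integral_Ioo_rpow_mul_one_sub_rpow {s : ℝ} (hs : 0 < s) (α : ℝ) {β : ℝ} (hβ : -1 < β) :
    IntegrableOn (fun y => y ^ α * (1 - y) ^ β) (Ioo (1 / (1 + s)) 1) ∧
    ∫ y in Ioo (1 / (1 + s)) 1, y ^ α * (1 - y) ^ β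
      = s ^ (1 + β) * ∫ u in Ioo 0 1, u ^ β * (1 + s * u) ^ (-(α + β + 2)) := by
  obtain ⟨hiff, heq⟩ := integral_Ioo_comp_inv_one_add_mul hs (fun y => y ^ α * (1 - y) ^ β)
  have hjac : EqOn (fun u => s / (1 + s * u) ^ 2 * ((1 + s * u)⁻¹ ^ α * (1 - (1 + s * u)⁻¹) ^ β))
      (fun u => s ^ (1 + β) * (u ^ β * (1 + s * u) ^ (-(α + β + 2)))) (Ioo 0 1) := by
    intro u hu
    have hu0 : 0 < u := hu.1
    have hc : 0 < 1 + s * u := by positivity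
    have h1 : 1 - (1 + s * u)⁻¹ = s * u * (1 + s * u)⁻¹ := by field_simp; ring
    dsimp only
    rw [h1, mul_rpow (by positivity) (by positivity), mul_rpow hs.le hu0.le, inv_rpow hc.le,
      inv_rpow hc.le, ← rpow_neg hc.le, ← rpow_neg hc.le, rpow_add hs, rpow_one,
      div_eq_mul_inv, ← rpow_natCast, ← rpow_neg hc.le,
      show -(α + β + 2) = -(2:ℕ) + -α + -β by push_cast; ring, rpow_add hc, rpow_add hc]
    ring
  have hint : IntegrableOn (fun u => u ^ β * (1 + s * u) ^ (-(α + β + 2))) (Ioo 0 1) := by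
    refine ((intervalIntegral.integrableOn_Ioo_rpow_iff one_pos).2 hβ).mul_continuousOn_of_subset
      (K := Icc 0 1) ?_ measurableSet_Ioo isCompact_Icc Ioo_subset_Icc_self
    exact ContinuousOn.rpow_const (by fun_prop) fun u hu => Or.inl (by nlinarith [hu.1])
  refine ⟨hiff.2 (IntegrableOn.congr_fun (hint.const_mul _) hjac.symm measurableSet_Ioo), ?_⟩
  rw [heq, setIntegral_congr_fun measurableSet_Ioo hjac, integral_const_mul]

lemma rpow_mul_exp_mul_lowerGamma_eq {a δ s x : ℝ} (hs : 0 < s) (hx : 0 < x) :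
    x ^ (a - 1) * exp (-x) * (exp (-(s * x)) + (s * x) ^ δ * lowerGamma (1 - δ) (s * x))
      = x ^ (a - 1) * exp (-((1 + s) * x)) +
        s * (x ^ (a + 1 - 1) * exp (-x) * ∫ u in Ioo 0 1, u ^ (-δ) * exp (-(s * x * u))) := by
  have hz : 0 < s * x := by positivity
  rw [lowerGamma_eq_rpow_mul_integral _ hz, sub_sub_cancel_left, ← mul_assoc ((s * x) ^ δ),
    ← rpow_add hz, add_sub_cancel, rpow_one, add_sub_cancel_right,
    show x ^ a = x ^ (a - 1) * x by rw [← rpow_add_one hx.ne', sub_add_cancel],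
    show -((1 + s) * x) = -x + -(s * x) by ring, exp_add]
  ring

/-- For `δ ∈ (0,1)`, `s > 0` and a positive integer `m`,
`(1/Γ(m)) ∫_0^∞ x^{m−1} e^{−x} ( e^{−sx} + (sx)^δ γ(1−δ, sx) ) dx
   = (1+s)^{−m} + m s^δ ∫_{1/(1+s)}^1 y^{m+δ−1} (1−y)^{−δ} dy`,
and in particular both sides are finite (the defining integrals converge). -/
theorem stmt_2 (δ s : ℝ) (m : ℕ) (hδ : δ ∈ Set.Ioo (0:ℝ) 1) (hs : 0 < s) (hm : 0 < m) :
    IntegrableOn (fun x : ℝ =>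
        x ^ ((m : ℝ) - 1) * Real.exp (-x) *
          (Real.exp (-(s * x)) + (s * x) ^ δ * lowerGamma (1 - δ) (s * x)))
      (Set.Ioi 0) ∧
    IntegrableOn (fun y : ℝ => y ^ ((m : ℝ) + δ - 1) * (1 - y) ^ (-δ))
      (Set.Ioo (1 / (1 + s)) 1) ∧
    (1 / Real.Gamma m) *
        ∫ x in Set.Ioi 0,
          x ^ ((m : ℝ) - 1) * Real.exp (-x) *
            (Real.exp (-(s * x)) + (s * x) ^ δ * lowerGamma (1 - δ) (s * x))
      = (1 + s) ^ (-(m : ℝ)) +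
          m * s ^ δ *
            ∫ y in Set.Ioo (1 / (1 + s)) 1, y ^ ((m : ℝ) + δ - 1) * (1 - y) ^ (-δ) := by
  have hm0 : (0:ℝ) < m := by exact_mod_cast hm
  have hs1 : 0 < 1 + s := by linarith
  have hδ1 : -1 < -δ := by linarith [hδ.2]
  obtain ⟨hBint, hB⟩ := integral_Ioi_rpow_mul_exp_mul_integral (p := m + 1) (by positivity) hs.le
    ((intervalIntegral.integrableOn_Ioo_rpow_iff one_pos).2 hδ1)
  obtain ⟨hYint, hY⟩ := integral_Ioo_rpow_mul_one_sub_rpow hs ((m : ℝ) + δ - 1) hδ1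
  have hA := integrableOn_rpow_mul_exp_neg_mul (s := (m : ℝ) - 1) (by linarith) hs1
  have hsplit := fun x (hx : x ∈ Ioi (0:ℝ)) =>
    rpow_mul_exp_mul_lowerGamma_eq (a := m) (δ := δ) hs hx
  refine ⟨(hA.add (hBint.const_mul s)).congr_fun (fun x hx => (hsplit x hx).symm)
    measurableSet_Ioi, hYint, ?_⟩
  rw [setIntegral_congr_fun measurableSet_Ioi hsplit, integral_add hA (hBint.const_mul s),
    integral_const_mul, hB, integral_rpow_mul_exp_neg_mul_Ioi hm0 hs1, hY,
    show (m : ℝ) + δ - 1 + -δ + 2 = m + 1 by ring, Gamma_add_one hm0.ne', one_div (1 + s),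
    inv_rpow hs1.le, ← rpow_neg hs1.le]
  have hss : s ^ δ * s ^ (1 + -δ) = s := by rw [← rpow_add hs]; norm_num
  have hΓ : Gamma m ≠ 0 := (Gamma_pos_of_pos hm0).ne'
  set K := ∫ u in Ioo 0 1, u ^ (-δ) * (1 + s * u) ^ (-((m : ℝ) + 1))
  field_simp
  linear_combination -(m * K) * hss
end

section
/- For every δ ∈ (0,1), every real κ ≥ 1 and every positive integer K, lim_{θ→0⁺} (1 − C_κ(θ,1)^{−K})/θ = (K/κ) · δ/(1−δ). -/
/-!
Since `C_κ(0,1) = 1`, the limit is the right derivative at `0` of `θ ↦ 1 - C_κ(θ,1)^{-K}`, which by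
the chain rule is `K/κ` times the right derivative of `C₁(·,1)`. For the integral term, write
`a = 1/(1+θ)`: on `[a,1]` the factor `y^r` (`r ≥ 0`) lies between `a^r` and `1`, while
`∫_a^1 (1-y)^{-δ} dy = (1-a)^{1-δ}/(1-δ)` and `θ^δ (1-a)^{1-δ} = θ (1+θ)^{δ-1}`. This squeezes the
difference quotient of `θ^δ ∫_a^1 y^r (1-y)^{-δ} dy` to `1/(1-δ)`; together with the derivative
`-m` of `(1+θ)^{-m}` this gives `C₁'(0⁺,m) = m δ/(1-δ)`.
-/

open MeasureTheory Real Set Filter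
open Topology

/-- `C₁(s,m) := (1+s)^{−m} + m s^δ ∫_{1/(1+s)}^1 y^{m+δ−1} (1−y)^{−δ} dy`. -/
noncomputable def C1 (δ s : ℝ) (m : ℕ) : ℝ :=
  (1 + s) ^ (-(m : ℝ)) +
    m * s ^ δ * ∫ y in (1 / (1 + s))..1, y ^ ((m : ℝ) + δ - 1) * (1 - y) ^ (-δ)

/-- `C_κ(s,m) := (κ−1)/κ + C₁(s,m)/κ`. -/
noncomputable def Cκ (δ κ s : ℝ) (m : ℕ) : ℝ := (κ - 1) / κ + C1 δ s m / κ

theorem integral_one_sub_rpow_neg {δ : ℝ} (hδ : δ < 1) (a : ℝ) :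
    ∫ y in a..1, (1 - y) ^ (-δ) = (1 - a) ^ (1 - δ) / (1 - δ) := by
  rw [intervalIntegral.integral_comp_sub_left (fun x => x ^ (-δ)), sub_self,
    integral_rpow (Or.inl (by linarith)), zero_rpow (by linarith), neg_add_eq_sub, sub_zero]

theorem intervalIntegrable_one_sub_rpow_neg {δ : ℝ} (hδ : δ < 1) (a b : ℝ) :
    IntervalIntegrable (fun y => (1 - y) ^ (-δ)) volume a b := by
  simpa using (intervalIntegral.intervalIntegrable_rpow' (a := 1 - a) (b := 1 - b)
    (show -1 < -δ by linarith)).comp_sub_left 1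

theorem integral_rpow_mul_one_sub_rpow_neg_le {δ r a : ℝ} (hδ : δ < 1) (hr : 0 ≤ r)
    (ha₀ : 0 ≤ a) (ha₁ : a ≤ 1) :
    ∫ y in a..1, y ^ r * (1 - y) ^ (-δ) ≤ (1 - a) ^ (1 - δ) / (1 - δ) := by
  rw [← integral_one_sub_rpow_neg hδ]
  refine intervalIntegral.integral_mono_on ha₁ ?_ (intervalIntegrable_one_sub_rpow_neg hδ a 1)
    fun y hy => mul_le_of_le_one_left (rpow_nonneg (by linarith [hy.2]) _)
      (rpow_le_one (ha₀.trans hy.1) hy.2 hr)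
  exact (intervalIntegrable_one_sub_rpow_neg hδ a 1).continuousOn_mul
    (continuous_id.rpow_const fun _ => Or.inr hr).continuousOn

theorem le_integral_rpow_mul_one_sub_rpow_neg {δ r a : ℝ} (hδ : δ < 1) (hr : 0 ≤ r)
    (ha₀ : 0 ≤ a) (ha₁ : a ≤ 1) :
    a ^ r * ((1 - a) ^ (1 - δ) / (1 - δ)) ≤ ∫ y in a..1, y ^ r * (1 - y) ^ (-δ) := by
  rw [← integral_one_sub_rpow_neg hδ, ← intervalIntegral.integral_const_mul]
  refine intervalIntegral.integral_mono_on ha₁ ((intervalIntegrable_one_sub_rpow_neg hδ a 1).const_mul _)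
    ?_ fun y hy => mul_le_mul_of_nonneg_right (rpow_le_rpow ha₀ hy.1 hr)
      (rpow_nonneg (by linarith [hy.2]) _)
  exact (intervalIntegrable_one_sub_rpow_neg hδ a 1).continuousOn_mul
    (continuous_id.rpow_const fun _ => Or.inr hr).continuousOn

theorem rpow_mul_one_sub_inv_one_add_rpow {δ θ : ℝ} (hθ : 0 ≤ θ) :
    θ ^ δ * (1 - (1 + θ)⁻¹) ^ (1 - δ) = θ * (1 + θ) ^ (δ - 1) := by
  have hb : 0 < 1 + θ := by linarith
  rw [show 1 - (1 + θ)⁻¹ = θ * (1 + θ)⁻¹ by field_simp; ring, mul_rpow hθ (inv_nonneg.2 hb.le),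
    ← mul_assoc, ← rpow_add' hθ (by norm_num), add_sub_cancel, rpow_one, inv_rpow hb.le,
    ← rpow_neg hb.le, neg_sub]

theorem hasDerivWithinAt_rpow_mul_integral_rpow_mul_one_sub_rpow_neg {δ r : ℝ} (hδ₀ : 0 < δ)
    (hδ₁ : δ < 1) (hr : 0 ≤ r) :
    HasDerivWithinAt (fun θ => θ ^ δ * ∫ y in (1 + θ)⁻¹..1, y ^ r * (1 - y) ^ (-δ))
      (1 / (1 - δ)) (Ioi 0) 0 := by
  rw [hasDerivWithinAt_iff_tendsto_slope' self_notMem_Ioi]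
  set upper : ℝ → ℝ := fun θ => (1 + θ) ^ (δ - 1) / (1 - δ)
  have h_upper : Tendsto upper (𝓝[>] 0) (𝓝 (1 / (1 - δ))) := by
    have : ContinuousAt upper 0 := by fun_prop (disch := norm_num)
    simpa [upper] using this.tendsto.mono_left nhdsWithin_le_nhds
  have h_lower : Tendsto (fun θ => ((1 + θ)⁻¹) ^ r * upper θ) (𝓝[>] 0) (𝓝 (1 / (1 - δ))) := by
    have : ContinuousAt (fun θ : ℝ => ((1 + θ)⁻¹) ^ r) 0 := by fun_prop (disch := norm_num)
    simpa using (this.tendsto.mono_left nhdsWithin_le_nhds).mul h_upper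
  have bounds : ∀ θ : ℝ, 0 < θ →
      (1 + θ)⁻¹ ^ r * upper θ * θ ≤ θ ^ δ * ∫ y in (1 + θ)⁻¹..1, y ^ r * (1 - y) ^ (-δ) ∧
      θ ^ δ * ∫ y in (1 + θ)⁻¹..1, y ^ r * (1 - y) ^ (-δ) ≤ upper θ * θ := by
    intro θ hθ
    have ha₀ : 0 ≤ (1 + θ)⁻¹ := by positivity
    have ha₁ : (1 + θ)⁻¹ ≤ 1 := inv_le_one_of_one_le₀ (by linarith)
    have key := rpow_mul_one_sub_inv_one_add_rpow (δ := δ) hθ.le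
    constructor
    · calc (1 + θ)⁻¹ ^ r * upper θ * θ
          = θ ^ δ * ((1 + θ)⁻¹ ^ r * ((1 - (1 + θ)⁻¹) ^ (1 - δ) / (1 - δ))) := by
            linear_combination (-((1 + θ)⁻¹ ^ r / (1 - δ))) * key
        _ ≤ _ := by gcongr; exact le_integral_rpow_mul_one_sub_rpow_neg hδ₁ hr ha₀ ha₁
    · calc θ ^ δ * ∫ y in (1 + θ)⁻¹..1, y ^ r * (1 - y) ^ (-δ)
          ≤ θ ^ δ * ((1 - (1 + θ)⁻¹) ^ (1 - δ) / (1 - δ)) := by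
            gcongr; exact integral_rpow_mul_one_sub_rpow_neg_le hδ₁ hr ha₀ ha₁
        _ = upper θ * θ := by linear_combination key / (1 - δ)
  refine tendsto_of_tendsto_of_tendsto_of_le_of_le' h_lower h_upper ?_ ?_ <;>
    filter_upwards [self_mem_nhdsWithin] with θ (hθ : 0 < θ) <;>
    rw [slope_def_field, zero_rpow hδ₀.ne', zero_mul, sub_zero, sub_zero]
  exacts [(le_div_iff₀ hθ).2 (bounds θ hθ).1, (div_le_iff₀ hθ).2 (bounds θ hθ).2]

theorem C1_zero {δ : ℝ} (hδ : δ ≠ 0) (m : ℕ) : C1 δ 0 m = 1 := by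
  simp [C1, zero_rpow hδ]

theorem hasDerivWithinAt_C1 {δ : ℝ} (hδ₀ : 0 < δ) (hδ₁ : δ < 1) (m : ℕ) :
    HasDerivWithinAt (fun s => C1 δ s m) (m * (δ / (1 - δ))) (Ioi 0) 0 := by
  rcases Nat.eq_zero_or_pos m with rfl | hm
  · simpa [C1] using hasDerivWithinAt_const (0 : ℝ) (Ioi 0) (1 : ℝ)
  have h_pow : HasDerivAt (fun s : ℝ => (1 + s) ^ (-(m : ℝ))) (-m) 0 := by
    simpa using ((hasDerivAt_id (0 : ℝ)).const_add 1).rpow_const (p := -(m : ℝ))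
      (Or.inl (by norm_num))
  have hr : (0 : ℝ) ≤ m + δ - 1 := by
    have : (1 : ℝ) ≤ m := by exact_mod_cast hm
    linarith
  have h_int := hasDerivWithinAt_rpow_mul_integral_rpow_mul_one_sub_rpow_neg hδ₀ hδ₁ hr
  have h_C1 : (fun s => C1 δ s m) = fun s => (1 + s) ^ (-(m : ℝ)) +
      m * (s ^ δ * ∫ y in (1 + s)⁻¹..1, y ^ ((m : ℝ) + δ - 1) * (1 - y) ^ (-δ)) := by
    funext s; simp only [C1, one_div, mul_assoc]
  rw [h_C1]
  refine (h_pow.hasDerivWithinAt.add (h_int.const_mul (m : ℝ))).congr_deriv ?_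
  have : 1 - δ ≠ 0 := by linarith
  field_simp; ring

theorem hasDerivWithinAt_Cκ {δ : ℝ} (hδ₀ : 0 < δ) (hδ₁ : δ < 1) (κ : ℝ) (m : ℕ) :
    HasDerivWithinAt (fun s => Cκ δ κ s m) (m * (δ / (1 - δ)) / κ) (Ioi 0) 0 :=
  ((hasDerivWithinAt_C1 hδ₀ hδ₁ m).div_const κ).const_add _

theorem Cκ_zero {δ κ : ℝ} (hδ : δ ≠ 0) (hκ : κ ≠ 0) (m : ℕ) : Cκ δ κ 0 m = 1 := by
  rw [Cκ, C1_zero hδ]; field_simp; ring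

theorem stmt_4_general (δ κ : ℝ) (K : ℕ) (hδ : δ ∈ Set.Ioo (0:ℝ) 1) (hκ : 1 ≤ κ) :
    Tendsto (fun θ : ℝ => (1 - Cκ δ κ θ 1 ^ (-(K : ℤ))) / θ) (nhdsWithin 0 (Set.Ioi 0))
      (nhds ((K / κ) * (δ / (1 - δ)))) := by
  obtain ⟨hδ₀, hδ₁⟩ := hδ
  have hC : Cκ δ κ 0 1 = 1 := Cκ_zero hδ₀.ne' (by linarith) 1
  have h_pow : HasDerivAt (fun x : ℝ => 1 - x ^ (-(K : ℤ))) K (Cκ δ κ 0 1) := by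
    simpa [hC] using ((hasDerivAt_zpow (-(K : ℤ)) (1 : ℝ) (Or.inl one_ne_zero)).const_sub 1)
  have h := (hasDerivWithinAt_iff_tendsto_slope' self_notMem_Ioi).1
    (h_pow.comp_hasDerivWithinAt 0 (hasDerivWithinAt_Cκ hδ₀ hδ₁ κ 1))
  convert h using 1
  · funext θ; simp [slope_def_field, hC]
  · rw [Nat.cast_one, one_mul]; congr 1; ring

/-- For `δ ∈ (0,1)`, `κ ≥ 1` and a positive integer `K`,
`lim_{θ→0⁺} (1 − C_κ(θ,1)^{−K})/θ = (K/κ) · δ/(1−δ)`. -/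
theorem stmt_4 (δ κ : ℝ) (K : ℕ) (hδ : δ ∈ Set.Ioo (0:ℝ) 1) (hκ : 1 ≤ κ) (hK : 0 < K) :
    Tendsto (fun θ : ℝ => (1 - Cκ δ κ θ 1 ^ (-(K : ℤ))) / θ) (nhdsWithin 0 (Set.Ioi 0))
      (nhds ((K / κ) * (δ / (1 - δ)))) :=
  stmt_4_general δ κ K hδ hκ
end
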